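/- If a unit vector ψ ∈ ℂ^{2^n} is prepared by Clifford gates plus at most t Pauli-rotation gates, then the number of indices i ∈ [n] for which some element of stab(ψ) acts non-trivially on qubit i (i.e. some P = i^ℓ·Q_1⊗⋯⊗Q_n ∈ stab(ψ) has Q_i ≠ I) is at least n − t. -/

import Mathlib

open Matrix

noncomputable section

/-- The space of `n`-qubit operators (2^n × 2^n complex matrices, indexed by bit strings). -/
abbrev QMat (n : ℕ) := Matrix (Fin n → Fin 2) (Fin n → Fin 2) ℂ

/-- The space of `n`-qubit state vectors (ℂ^{2^n}, indexed by bit strings). -/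
abbrev QVec (n : ℕ) := (Fin n → Fin 2) → ℂ

def PauliX : Matrix (Fin 2) (Fin 2) ℂ := !![0, 1; 1, 0]
def PauliY : Matrix (Fin 2) (Fin 2) ℂ := !![0, -Complex.I; Complex.I, 0]
def PauliZ : Matrix (Fin 2) (Fin 2) ℂ := !![1, 0; 0, -1]

/-- `Q` is one of the four single-qubit Pauli matrices `I, X, Y, Z`. -/
def IsSingleQubitPauli (Q : Matrix (Fin 2) (Fin 2) ℂ) : Prop :=
  Q = 1 ∨ Q = PauliX ∨ Q = PauliY ∨ Q = PauliZ

/-- Kronecker product, in qubit order, of `n` single-qubit operators. -/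
def tensorn (n : ℕ) (Q : Fin n → Matrix (Fin 2) (Fin 2) ℂ) : QMat n :=
  fun x y => ∏ j, Q j (x j) (y j)

/-- `P` is an element of the `n`-qubit Pauli group: `P = i^ℓ · Q_1 ⊗ ⋯ ⊗ Q_n`. -/
def IsPauli {n : ℕ} (P : QMat n) : Prop :=
  ∃ (ℓ : Fin 4) (Q : Fin n → Matrix (Fin 2) (Fin 2) ℂ),
    (∀ j, IsSingleQubitPauli (Q j)) ∧ P = (Complex.I ^ (ℓ : ℕ)) • tensorn n Q

/-- Member of the `n`-qubit Clifford group: a unitary mapping Pauli operators to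
Pauli operators under conjugation. -/
def IsClifford {n : ℕ} (U : QMat n) : Prop :=
  U ∈ Matrix.unitaryGroup (Fin n → Fin 2) ℂ ∧ ∀ P : QMat n, IsPauli P → IsPauli (U * P * Uᴴ)

/-- A Pauli-rotation gate `exp(iθP)` with `θ ∈ ℝ` and `P` a Pauli operator. -/
def IsPauliRotation {n : ℕ} (R : QMat n) : Prop :=
  ∃ (θ : ℝ) (P : QMat n), IsPauli P ∧ R = NormedSpace.exp (((θ : ℂ) * Complex.I) • P)

/-- The first standard basis vector `e₀` of ℂ^{2^n} (the all-zeros bit string). -/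
def e0 (n : ℕ) : QVec n := fun x => if x = (fun _ => 0) then 1 else 0

/-- `ψ = C_s R_s ⋯ C_1 R_1 C_0 e₀` for some `s ≤ t`, where each `C_j` is Clifford and
each `R_j` is a Pauli-rotation gate: `ψ` is prepared by Clifford gates plus at most `t`
Pauli-rotation gates. -/
def PreparedBy {n : ℕ} (t : ℕ) (ψ : QVec n) : Prop :=
  ∃ s : ℕ, s ≤ t ∧ ∃ (C R : ℕ → QMat n) (v : ℕ → QVec n),
    (∀ j, j ≤ s → IsClifford (C j)) ∧
    (∀ j, 1 ≤ j → j ≤ s → IsPauliRotation (R j)) ∧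
    v 0 = (C 0) *ᵥ (e0 n) ∧
    (∀ j, j < s → v (j + 1) = (C (j + 1)) *ᵥ ((R (j + 1)) *ᵥ v j)) ∧
    ψ = v s

/-!
Up to a phase, every Pauli operator is a word `X^x Z^z` with `(x, z) ∈ 𝔽₂ⁿ × 𝔽₂ⁿ`, so the
stabilizer group of `ψ` modulo phases is an `𝔽₂`-subspace `S(ψ)`. For `e₀` it contains all
`Z`-words, so `dim S(e₀) ≥ n`; conjugation by a Clifford gate `C` injects `S(ψ)` into `S(Cψ)`;
and `exp(iθP)` stabilizes every word of `S(ψ)` commuting with `P`, a subspace of codimension at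
most one. Hence `dim S(ψ) ≥ n - t`. On the other hand, two words stabilizing the same nonzero
vector commute, so `S(ψ)` is isotropic for the standard symplectic form; as it is supported on
the set `T` of qubits on which some stabilizer acts nontrivially, `dim S(ψ) ≤ |T|`.
-/

lemma ZMod.two_cases (v : ZMod 2) : v = 0 ∨ v = 1 := by decide +revert

def signChar : AddChar (ZMod 2) ℂ where
  toFun v := if v = 0 then 1 else -1
  map_zero_eq_one' := if_pos rfl
  map_add_eq_mul' u v := by
    rcases u.two_cases with rfl | rfl <;> rcases v.two_cases with rfl | rfl <;>
      simp [CharTwo.add_self_eq_zero]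

@[simp] lemma signChar_one : signChar 1 = -1 := rfl

lemma signChar_injective : Function.Injective signChar := by
  intro u v huv
  rcases u.two_cases with rfl | rfl <;> rcases v.two_cases with rfl | rfl <;>
    simp_all [signChar] <;> norm_num at huv

lemma signChar_sum {ι : Type*} (s : Finset ι) (f : ι → ZMod 2) :
    signChar (∑ j ∈ s, f j) = ∏ j ∈ s, signChar (f j) := by
  classical
  induction s using Finset.induction_on with
  | empty => simp
  | insert j s hj ih => rw [Finset.sum_insert hj, Finset.prod_insert hj, AddChar.map_add_eq_mul, ih]

lemma signChar_mem_powers_I (v : ZMod 2) : signChar v ∈ Submonoid.powers Complex.I := by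
  rcases v.two_cases with rfl | rfl
  · exact ⟨0, by simp⟩
  · exact ⟨2, by simp [signChar]⟩

lemma ne_zero_of_mem_powers_I {c : ℂ} (hc : c ∈ Submonoid.powers Complex.I) : c ≠ 0 := by
  obtain ⟨k, rfl⟩ := hc
  exact pow_ne_zero k Complex.I_ne_zero

lemma exists_fin_four_of_mem_powers_I {c : ℂ} (hc : c ∈ Submonoid.powers Complex.I) :
    ∃ ℓ : Fin 4, c = Complex.I ^ (ℓ : ℕ) := by
  obtain ⟨k, rfl⟩ := hc
  exact ⟨⟨k % 4, Nat.mod_lt k four_pos⟩, pow_eq_pow_mod k Complex.I_pow_four⟩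

abbrev bit : Fin 2 ≃+* ZMod 2 := ZMod.finEquiv 2

/-- The matrix `X^x Z^z`. -/
def pauliXZ (x z : ZMod 2) : Matrix (Fin 2) (Fin 2) ℂ :=
  fun a b => if bit a = bit b + x then signChar (z * bit b) else 0

lemma pauliXZ_mul (x z x' z' : ZMod 2) :
    pauliXZ x z * pauliXZ x' z' = signChar (z * x') • pauliXZ (x + x') (z + z') := by
  ext a b
  rw [mul_apply, Finset.sum_eq_single (bit.symm (bit b + x'))]
  · simp only [pauliXZ, RingEquiv.apply_symm_apply, if_true, Matrix.smul_apply, smul_eq_mul,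
      mul_ite, mul_zero, ite_mul, zero_mul, ← AddChar.map_add_eq_mul, add_right_comm _ x' x]
    rw [show z * (bit b + x') + z' * bit b = z * x' + (z + z') * bit b by ring, add_assoc]
  · intro c _ hc
    rw [pauliXZ, pauliXZ, if_neg (fun h => hc (bit.eq_symm_apply.mpr h)), mul_zero]
  · simp

lemma pauliXZ_zero_zero : pauliXZ 0 0 = 1 := by
  ext a b
  simp [pauliXZ, one_apply]

lemma pauliXZ_one_zero : pauliXZ 1 0 = PauliX := by
  ext a b
  fin_cases a <;> fin_cases b <;> simp [pauliXZ, PauliX, CharTwo.add_self_eq_zero]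

lemma pauliXZ_zero_one : pauliXZ 0 1 = PauliZ := by
  ext a b
  fin_cases a <;> fin_cases b <;> simp [pauliXZ, PauliZ]

lemma pauliXZ_one_one : pauliXZ 1 1 = Complex.I ^ 3 • PauliY := by
  ext a b
  fin_cases a <;> fin_cases b <;> simp [pauliXZ, PauliY, CharTwo.add_self_eq_zero, pow_succ]

lemma tensorn_mul {n : ℕ} (Q Q' : Fin n → Matrix (Fin 2) (Fin 2) ℂ) :
    tensorn n Q * tensorn n Q' = tensorn n fun j => Q j * Q' j := by
  ext x y
  simp only [tensorn, mul_apply, Finset.prod_univ_sum, Fintype.piFinset_univ,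
    Finset.prod_mul_distrib]

lemma tensorn_smul {n : ℕ} (c : Fin n → ℂ) (Q : Fin n → Matrix (Fin 2) (Fin 2) ℂ) :
    tensorn n (fun j => c j • Q j) = (∏ j, c j) • tensorn n Q := by
  ext x y
  simp only [tensorn, Matrix.smul_apply, smul_eq_mul, Finset.prod_mul_distrib]

lemma tensorn_one {n : ℕ} : tensorn n (fun _ => 1) = 1 := by
  ext x y
  simp [tensorn, one_apply, Finset.prod_ite_zero, funext_iff]

/-- A Pauli operator up to phase, recorded by its `X`- and `Z`-exponents. -/
abbrev PauliVec (ι : Type*) := (ι → ZMod 2) × (ι → ZMod 2)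

section PauliWord

variable {n : ℕ}

def pauliWord (a : PauliVec (Fin n)) : QMat n :=
  tensorn n fun j => pauliXZ (a.1 j) (a.2 j)

lemma pauliWord_mul (a b : PauliVec (Fin n)) :
    pauliWord a * pauliWord b = signChar (a.2 ⬝ᵥ b.1) • pauliWord (a + b) := by
  simp only [pauliWord, tensorn_mul, pauliXZ_mul, tensorn_smul, dotProduct, signChar_sum,
    Prod.fst_add, Prod.snd_add, Pi.add_apply]

lemma pauliWord_zero : pauliWord (0 : PauliVec (Fin n)) = 1 := by
  simp only [pauliWord, Prod.fst_zero, Prod.snd_zero, Pi.zero_apply, pauliXZ_zero_zero, tensorn_one]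

lemma pauliWord_apply (a : PauliVec (Fin n)) (x y : Fin n → Fin 2) :
    pauliWord a x y =
      if ∀ j, bit (x j) = bit (y j) + a.1 j then
        signChar (a.2 ⬝ᵥ fun j => bit (y j))
      else 0 := by
  simp only [pauliWord, tensorn, pauliXZ, Finset.prod_ite_zero, Finset.mem_univ, true_implies,
    dotProduct, signChar_sum]

lemma eq_of_smul_pauliWord_eq_smul_pauliWord {a b : PauliVec (Fin n)} {c d : ℂ}
    (hc : c ≠ 0) (h : c • pauliWord a = d • pauliWord b) : a = b := by
  have entry (v w : Fin n → ZMod 2) :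
      c * pauliWord a (bit.symm ∘ v) (bit.symm ∘ w) =
        d * pauliWord b (bit.symm ∘ v) (bit.symm ∘ w) := by
    simpa using congrFun (congrFun h (bit.symm ∘ v)) (bit.symm ∘ w)
  simp only [pauliWord_apply, Function.comp_apply, RingEquiv.apply_symm_apply] at entry
  obtain ⟨h₁, rfl⟩ : a.1 = b.1 ∧ c = d := by
    have := entry a.1 0
    simp only [Pi.zero_apply, zero_add, implies_true, ↓reduceIte, dotProduct_zero',
      AddChar.map_zero_eq_one, mul_one, mul_ite, mul_zero] at this
    split_ifs at this with hab
    · exact ⟨funext hab, this⟩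
    · exact absurd this hc
  refine Prod.ext h₁ (funext fun j => signChar_injective (mul_left_cancel₀ hc ?_))
  have := entry (Pi.single j 1 + a.1) (Pi.single j 1)
  simp only [h₁, Pi.add_apply, implies_true, if_true] at this
  simpa [dotProduct_single] using this

lemma IsSingleQubitPauli.exists_eq_smul_pauliXZ {Q : Matrix (Fin 2) (Fin 2) ℂ}
    (hQ : IsSingleQubitPauli Q) : ∃ (x z : ZMod 2) (k : ℕ), Q = Complex.I ^ k • pauliXZ x z := by
  rcases hQ with rfl | rfl | rfl | rfl
  · exact ⟨0, 0, 0, by rw [pow_zero, one_smul, pauliXZ_zero_zero]⟩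
  · exact ⟨1, 0, 0, by rw [pow_zero, one_smul, pauliXZ_one_zero]⟩
  · exact ⟨1, 1, 1, by rw [pauliXZ_one_one, smul_smul, ← pow_add]; norm_num⟩
  · exact ⟨0, 1, 0, by rw [pow_zero, one_smul, pauliXZ_zero_one]⟩

lemma exists_pauliXZ_eq_smul_isSingleQubitPauli (x z : ZMod 2) :
    ∃ (Q : Matrix (Fin 2) (Fin 2) ℂ) (k : ℕ),
      IsSingleQubitPauli Q ∧ (Q = 1 ↔ x = 0 ∧ z = 0) ∧ pauliXZ x z = Complex.I ^ k • Q := by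
  have hX : PauliX ≠ 1 := fun h => by simpa [PauliX] using congrFun (congrFun h 0) 0
  have hY : PauliY ≠ 1 := fun h => by simpa [PauliY] using congrFun (congrFun h 0) 0
  have hZ : PauliZ ≠ 1 := fun h => by
    have := congrFun (congrFun h 1) 1
    norm_num [PauliZ] at this
  rcases x.two_cases with rfl | rfl <;> rcases z.two_cases with rfl | rfl
  · exact ⟨1, 0, .inl rfl, by simp, by rw [pow_zero, one_smul, pauliXZ_zero_zero]⟩
  · exact ⟨PauliZ, 0, .inr (.inr (.inr rfl)), by simp [hZ],
      by rw [pow_zero, one_smul, pauliXZ_zero_one]⟩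
  · exact ⟨PauliX, 0, .inr (.inl rfl), by simp [hX], by rw [pow_zero, one_smul, pauliXZ_one_zero]⟩
  · exact ⟨PauliY, 3, .inr (.inr (.inl rfl)), by simp [hY], pauliXZ_one_one⟩

lemma exists_pauliWord_eq_smul_tensorn (a : PauliVec (Fin n)) :
    ∃ Q : Fin n → Matrix (Fin 2) (Fin 2) ℂ, (∀ j, IsSingleQubitPauli (Q j)) ∧
      (∀ j, Q j = 1 ↔ a.1 j = 0 ∧ a.2 j = 0) ∧
      ∃ k : ℕ, pauliWord a = Complex.I ^ k • tensorn n Q := by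
  choose Q k hQ hQ₁ hk using fun j => exists_pauliXZ_eq_smul_isSingleQubitPauli (a.1 j) (a.2 j)
  refine ⟨Q, hQ, hQ₁, ∑ j, k j, ?_⟩
  rw [pauliWord, funext hk, tensorn_smul, Finset.prod_pow_eq_pow_sum]

lemma IsPauli.exists_eq_smul_pauliWord {P : QMat n} (hP : IsPauli P) :
    ∃ a : PauliVec (Fin n), ∃ c ∈ Submonoid.powers Complex.I, P = c • pauliWord a := by
  obtain ⟨ℓ, Q, hQ, rfl⟩ := hP
  choose x z k hk using fun j => (hQ j).exists_eq_smul_pauliXZ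
  refine ⟨(x, z), Complex.I ^ ((ℓ : ℕ) + ∑ j, k j), ⟨_, rfl⟩, ?_⟩
  rw [funext hk, tensorn_smul, Finset.prod_pow_eq_pow_sum, smul_smul, ← pow_add, pauliWord]

lemma isPauli_pauliWord (a : PauliVec (Fin n)) : IsPauli (pauliWord a) := by
  obtain ⟨Q, hQ, -, k, hk⟩ := exists_pauliWord_eq_smul_tensorn a
  obtain ⟨ℓ, hℓ⟩ := exists_fin_four_of_mem_powers_I (pow_mem (Submonoid.mem_powers _) k)
  exact ⟨ℓ, Q, hQ, hk.trans (by rw [hℓ])⟩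

end PauliWord

section Symplectic

open Module

variable (K ι : Type*) [Fintype ι]

def symplecticForm [CommRing K] : LinearMap.BilinForm K ((ι → K) × (ι → K)) :=
  (dotProductBilin K K).compl₁₂ (LinearMap.snd K _ _) (LinearMap.fst K _ _) -
    ((dotProductBilin K K).compl₁₂ (LinearMap.snd K _ _) (LinearMap.fst K _ _)).flip

variable {K ι}

lemma symplecticForm_apply [CommRing K] (a b : (ι → K) × (ι → K)) :
    symplecticForm K ι a b = a.2 ⬝ᵥ b.1 - b.2 ⬝ᵥ a.1 := rfl

lemma symplecticForm_nondegenerate [CommRing K] : (symplecticForm K ι).Nondegenerate := by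
  classical
  constructor <;> intro m hm <;> ext i
  · simpa [symplecticForm_apply] using hm (0, Pi.single i 1)
  · simpa [symplecticForm_apply] using hm (Pi.single i 1, 0)
  · simpa [symplecticForm_apply] using hm (0, Pi.single i 1)
  · simpa [symplecticForm_apply] using hm (Pi.single i 1, 0)

lemma finrank_le_card_of_isotropic [Field K] {U : Submodule K ((ι → K) × (ι → K))}
    (hU : ∀ a ∈ U, ∀ b ∈ U, symplecticForm K ι a b = 0) : finrank K U ≤ Fintype.card ι := by
  have hle : U ≤ (symplecticForm K ι).orthogonal U := fun b hb =>
    LinearMap.BilinForm.mem_orthogonal_iff.2 fun a ha => hU a ha b hb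
  have := Submodule.finrank_mono hle
  rw [LinearMap.BilinForm.finrank_orthogonal symplecticForm_nondegenerate, finrank_prod,
    finrank_fintype_fun_eq_card] at this
  omega

lemma finrank_le_ncard_of_isotropic_of_support [Field K] {U : Submodule K ((ι → K) × (ι → K))}
    (hU : ∀ a ∈ U, ∀ b ∈ U, symplecticForm K ι a b = 0) {s : Set ι}
    (hs : ∀ a ∈ U, ∀ i ∉ s, a.1 i = 0 ∧ a.2 i = 0) : finrank K U ≤ s.ncard := by
  classical
  let restrict : (ι → K) →ₗ[K] (s → K) := LinearMap.funLeft K K Subtype.val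
  let ρ := (restrict.prodMap restrict).comp U.subtype
  have sum_restrict {f : ι → K} (hf : ∀ i ∉ s, f i = 0) : ∑ i : s, f i = ∑ i, f i := by
    rw [Finset.sum_set_coe]
    exact Finset.sum_subset (Finset.subset_univ _) fun i _ hi => hf i (by simpa using hi)
  have hρ : Function.Injective ρ := by
    rw [← LinearMap.ker_eq_bot, Submodule.eq_bot_iff]
    rintro ⟨a, ha⟩ hρa
    have hρa' := Prod.ext_iff.1 hρa
    ext i <;> by_cases hi : i ∈ s
    exacts [congrFun hρa'.1 ⟨i, hi⟩, (hs a ha i hi).1, congrFun hρa'.2 ⟨i, hi⟩, (hs a ha i hi).2]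
  rw [← LinearMap.finrank_range_of_inj hρ, ← Nat.card_coe_set_eq, Nat.card_eq_fintype_card]
  refine finrank_le_card_of_isotropic ?_
  rintro _ ⟨⟨a, ha⟩, rfl⟩ _ ⟨⟨b, hb⟩, rfl⟩
  rw [← hU a ha b hb, symplecticForm_apply, symplecticForm_apply, dotProduct, dotProduct,
    dotProduct, dotProduct]
  simp only [ρ, restrict, LinearMap.comp_apply, LinearMap.prodMap_apply, LinearMap.funLeft_apply,
    Submodule.subtype_apply]
  rw [sum_restrict (f := fun i => a.2 i * b.1 i), sum_restrict (f := fun i => b.2 i * a.1 i)] <;>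
    intro i hi <;> simp [hs a ha i hi, hs b hb i hi]

end Symplectic

lemma finrank_le_finrank_of_injective {K V W : Type*} [Field K] [Finite K] [AddCommGroup V]
    [Module K V] [Module.Finite K V] [AddCommGroup W] [Module K W] [Module.Finite K W]
    {S : Submodule K V} {T : Submodule K W} (f : V → W) (hf : Function.Injective f)
    (hST : ∀ v ∈ S, f v ∈ T) : Module.finrank K S ≤ Module.finrank K T := by
  have : Finite W := Module.finite_of_finite K
  have hcard : Nat.card S ≤ Nat.card T :=
    Set.ncard_le_ncard_of_injOn f hST hf.injOn (Set.toFinite _)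
  rwa [Module.natCard_eq_pow_finrank (K := K) (V := S),
    Module.natCard_eq_pow_finrank (K := K) (V := T),
    Nat.pow_le_pow_iff_right Finite.one_lt_card] at hcard

lemma finrank_le_finrank_inf_ker_add_one {K V : Type*} [Field K] [AddCommGroup V] [Module K V]
    [FiniteDimensional K V] (S : Submodule K V) (f : V →ₗ[K] K) :
    Module.finrank K S ≤ Module.finrank K ↥(S ⊓ LinearMap.ker f) + 1 := by
  have h₁ := Submodule.finrank_sup_add_finrank_inf_eq S (LinearMap.ker f)
  have h₂ := Submodule.finrank_le (S ⊔ LinearMap.ker f)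
  have h₃ := LinearMap.finrank_range_add_finrank_ker f
  have h₄ := (Submodule.finrank_le (LinearMap.range f)).trans (Module.finrank_self K).le
  omega

section Stabilizer

open Module

variable {n : ℕ}

/-- `stab(ψ)` modulo phases. -/
def stabSpace (ψ : QVec n) : Submodule (ZMod 2) (PauliVec (Fin n)) where
  carrier := {a | ∃ c ∈ Submonoid.powers Complex.I, (c • pauliWord a) *ᵥ ψ = ψ}
  add_mem' := by
    rintro a b ⟨c, hc, hca⟩ ⟨d, hd, hdb⟩
    refine ⟨c * d * signChar (a.2 ⬝ᵥ b.1), mul_mem (mul_mem hc hd) (signChar_mem_powers_I _), ?_⟩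
    rw [mul_smul, ← pauliWord_mul, ← smul_mul_smul_comm, ← mulVec_mulVec, hdb, hca]
  zero_mem' := ⟨1, one_mem _, by rw [one_smul, pauliWord_zero, one_mulVec]⟩
  smul_mem' c a ha := by
    rcases c.two_cases with rfl | rfl
    · rw [zero_smul]
      exact ⟨1, one_mem _, by rw [one_smul, pauliWord_zero, one_mulVec]⟩
    · rwa [one_smul]

lemma pauliWord_mul_comm (a b : PauliVec (Fin n)) :
    pauliWord a * pauliWord b =
      signChar (symplecticForm (ZMod 2) (Fin n) a b) • (pauliWord b * pauliWord a) := by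
  rw [pauliWord_mul, pauliWord_mul, smul_smul, ← AddChar.map_add_eq_mul, symplecticForm_apply,
    sub_add_cancel, add_comm b a]

lemma stabSpace_isotropic {ψ : QVec n} (hψ : ψ ≠ 0) {a b : PauliVec (Fin n)}
    (ha : a ∈ stabSpace ψ) (hb : b ∈ stabSpace ψ) : symplecticForm (ZMod 2) (Fin n) a b = 0 := by
  obtain ⟨c, -, hca⟩ := ha
  obtain ⟨d, -, hdb⟩ := hb
  have hab : ((c • pauliWord a) * (d • pauliWord b)) *ᵥ ψ = ψ := by
    rw [← mulVec_mulVec, hdb, hca]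
  have hba : ((d • pauliWord b) * (c • pauliWord a)) *ᵥ ψ = ψ := by
    rw [← mulVec_mulVec, hca, hdb]
  have hcomm : (c • pauliWord a) * (d • pauliWord b) =
      signChar (symplecticForm (ZMod 2) (Fin n) a b) • ((d • pauliWord b) * (c • pauliWord a)) := by
    rw [smul_mul_smul_comm, smul_mul_smul_comm, pauliWord_mul_comm, smul_smul, smul_smul,
      mul_comm d c, mul_comm]
  rw [hcomm, smul_mulVec, hba] at hab
  apply signChar_injective
  rw [AddChar.map_zero_eq_one]
  exact smul_left_injective ℂ hψ (hab.trans (one_smul ℂ ψ).symm)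

lemma pauliWord_mulVec_e0 (z : Fin n → ZMod 2) : pauliWord (0, z) *ᵥ e0 n = e0 n := by
  have he0 : e0 n = Pi.single (fun _ => 0) 1 := by
    ext x
    simp [e0, Pi.single_apply]
  rw [he0, mulVec_single_one]
  ext x
  simp [pauliWord_apply, Pi.single_apply, funext_iff]

lemma le_finrank_stabSpace_e0 : n ≤ finrank (ZMod 2) (stabSpace (e0 n)) := by
  have hinr : LinearMap.range (LinearMap.inr (ZMod 2) (Fin n → ZMod 2) (Fin n → ZMod 2)) ≤
      stabSpace (e0 n) := by
    rintro _ ⟨z, rfl⟩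
    exact ⟨1, one_mem _, by rw [one_smul]; exact pauliWord_mulVec_e0 z⟩
  have := Submodule.finrank_mono hinr
  rwa [LinearMap.finrank_range_of_inj LinearMap.inr_injective, finrank_fin_fun] at this

lemma IsClifford.finrank_stabSpace_le {C : QMat n} (hC : IsClifford C) (ψ : QVec n) :
    finrank (ZMod 2) (stabSpace ψ) ≤ finrank (ZMod 2) (stabSpace (C *ᵥ ψ)) := by
  have hCC : Cᴴ * C = 1 := mem_unitaryGroup_iff'.1 hC.1
  have conj (M : QMat n) : Cᴴ * (C * M * Cᴴ) * C = M := by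
    rw [← mul_assoc, ← mul_assoc, hCC, one_mul, mul_assoc, hCC, mul_one]
  choose f c hc hf using fun a => (hC.2 _ (isPauli_pauliWord a)).exists_eq_smul_pauliWord
  -- `f` is linear as well, but counting only needs its injectivity.
  refine finrank_le_finrank_of_injective f (fun a b hab => ?_) fun a ⟨d, hd, hda⟩ => ?_
  · refine eq_of_smul_pauliWord_eq_smul_pauliWord (d := c a) (ne_zero_of_mem_powers_I (hc b)) ?_
    calc c b • pauliWord a = Cᴴ * (c b • (C * pauliWord a * Cᴴ)) * C := by
          rw [Matrix.mul_smul, Matrix.smul_mul, conj]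
      _ = Cᴴ * (c a • (C * pauliWord b * Cᴴ)) * C := by
          rw [hf, hf, hab, smul_smul, smul_smul, mul_comm]
      _ = c a • pauliWord b := by rw [Matrix.mul_smul, Matrix.smul_mul, conj]
  · refine ⟨c a * d, mul_mem (hc a) hd, ?_⟩
    have : (c a * d) • pauliWord (f a) = C * (d • pauliWord a) * Cᴴ := by
      rw [mul_comm, mul_smul, ← hf, Matrix.mul_smul, Matrix.smul_mul]
    rw [this, mulVec_mulVec, mul_assoc _ Cᴴ C, hCC, mul_one, ← mulVec_mulVec, hda]

lemma IsPauliRotation.finrank_stabSpace_le {R : QMat n} (hR : IsPauliRotation R) (ψ : QVec n) :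
    finrank (ZMod 2) (stabSpace ψ) ≤ finrank (ZMod 2) (stabSpace (R *ᵥ ψ)) + 1 := by
  obtain ⟨θ, P, hP, rfl⟩ := hR
  obtain ⟨p, c, -, rfl⟩ := hP.exists_eq_smul_pauliWord
  refine (finrank_le_finrank_inf_ker_add_one _ (symplecticForm (ZMod 2) (Fin n) p)).trans
    (Nat.add_le_add_right (Submodule.finrank_mono ?_) 1)
  rintro a ⟨⟨d, hd, hda⟩, hpa : symplecticForm (ZMod 2) (Fin n) p a = 0⟩
  have hcomm : Commute (d • pauliWord a) (((θ : ℂ) * Complex.I) • c • pauliWord p) := by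
    have : Commute (pauliWord p) (pauliWord a) := by
      rw [Commute, SemiconjBy, pauliWord_mul_comm, hpa, AddChar.map_zero_eq_one, one_smul]
    exact ((this.symm.smul_left d).smul_right c).smul_right _
  refine ⟨d, hd, ?_⟩
  rw [mulVec_mulVec, hcomm.exp_right.eq, ← mulVec_mulVec, hda]

lemma PreparedBy.sub_le_finrank_stabSpace {t : ℕ} {ψ : QVec n} (h : PreparedBy t ψ) :
    n - t ≤ finrank (ZMod 2) (stabSpace ψ) := by
  obtain ⟨s, hst, C, R, v, hC, hR, hv₀, hv, rfl⟩ := h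
  suffices ∀ j ≤ s, n - j ≤ finrank (ZMod 2) (stabSpace (v j)) from
    (Nat.sub_le_sub_left hst n).trans (this s le_rfl)
  intro j hj
  induction j with
  | zero =>
    rw [hv₀]
    exact le_finrank_stabSpace_e0.trans ((hC 0 hj).finrank_stabSpace_le _)
  | succ j ih =>
    have h₁ := (hR (j + 1) (Nat.le_add_left 1 j) hj).finrank_stabSpace_le (v j)
    have h₂ := (hC (j + 1) hj).finrank_stabSpace_le (R (j + 1) *ᵥ v j)
    rw [hv j hj]
    have := ih (Nat.le_of_succ_le hj)
    omega

lemma exists_pauli_stabilizer_of_mem_stabSpace {ψ : QVec n} {a : PauliVec (Fin n)}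
    (ha : a ∈ stabSpace ψ) :
    ∃ (ℓ : Fin 4) (Q : Fin n → Matrix (Fin 2) (Fin 2) ℂ), (∀ j, IsSingleQubitPauli (Q j)) ∧
      ((Complex.I ^ (ℓ : ℕ)) • tensorn n Q) *ᵥ ψ = ψ ∧ ∀ j, Q j = 1 ↔ a.1 j = 0 ∧ a.2 j = 0 := by
  obtain ⟨d, hd, hda⟩ := ha
  obtain ⟨Q, hQ, hQ₁, k, hk⟩ := exists_pauliWord_eq_smul_tensorn a
  obtain ⟨ℓ, hℓ⟩ :=
    exists_fin_four_of_mem_powers_I (mul_mem hd (pow_mem (Submonoid.mem_powers Complex.I) k))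
  refine ⟨ℓ, Q, hQ, ?_, hQ₁⟩
  rw [← hℓ, mul_smul, ← hk, hda]

end Stabilizer

/-- if `ψ` is prepared by Clifford gates plus at most `t` Pauli-rotation
gates, then at least `n - t` qubits are acted on non-trivially by some element of
`stab(ψ)`. -/
theorem many_nontrivially_stabilized_qubits (n t : ℕ) (ψ : QVec n)
    (hunit : star ψ ⬝ᵥ ψ = 1) (hprep : PreparedBy t ψ) :
    n - t ≤ Set.ncard {i : Fin n | ∃ (ℓ : Fin 4) (Q : Fin n → Matrix (Fin 2) (Fin 2) ℂ),
      (∀ j, IsSingleQubitPauli (Q j)) ∧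
      ((Complex.I ^ (ℓ : ℕ)) • tensorn n Q) *ᵥ ψ = ψ ∧ Q i ≠ 1} := by
  have hψ : ψ ≠ 0 := by
    rintro rfl
    simp at hunit
  refine hprep.sub_le_finrank_stabSpace.trans <|
    finrank_le_ncard_of_isotropic_of_support (fun a ha b hb => stabSpace_isotropic hψ ha hb) ?_
  intro a ha i hi
  obtain ⟨ℓ, Q, hQ, hQψ, hQ₁⟩ := exists_pauli_stabilizer_of_mem_stabSpace ha
  by_contra h
  exact hi ⟨ℓ, Q, hQ, hQψ, fun hQi => h ((hQ₁ i).1 hQi)⟩
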